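/- Let g ≥ 1, let σ : (Fin g → ℂ) → ℂ be analytic on all of ℂ^g, let ℓ ∈ ℂ^g, and suppose there exist c ∈ ℂ with c ≠ 0, a ∈ ℂ^g and b ∈ ℂ such that σ(u + ℓ) = c·exp(Σ_{k} a_k u_k + b)·σ(u) for all u ∈ ℂ^g. Then for every even n and all indices i₁,…,iₙ, the n-index Q-function of σ is periodic with period ℓ: for every u ∈ ℂ^g with σ(u) ≠ 0, one has σ(u+ℓ) ≠ 0 and Q_{i₁…iₙ}(u + ℓ) = Q_{i₁…iₙ}(u). -/

import Mathlib

open scoped BigOperators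

/-- Partial derivative in the `i`-th coordinate direction. -/
noncomputable def pd {g : ℕ} (i : Fin g) (f : (Fin g → ℂ) → ℂ) : (Fin g → ℂ) → ℂ :=
  fun u => fderiv ℂ f u (Pi.single i 1)

/-- Iterated partial derivatives along a list of indices. -/
noncomputable def pdList {g : ℕ} (l : List (Fin g)) (f : (Fin g → ℂ) → ℂ) : (Fin g → ℂ) → ℂ :=
  l.foldr pd f

/-- The 2-index Kleinian ℘-function `℘_{ij} = (∂_iσ·∂_jσ − σ·∂_i∂_jσ)/σ²`. -/
noncomputable def wp2 {g : ℕ} (σ : (Fin g → ℂ) → ℂ) (i j : Fin g) : (Fin g → ℂ) → ℂ :=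
  fun u => (pd i σ u * pd j σ u - σ u * pd i (pd j σ) u) / (σ u) ^ 2

/-- The n-index Kleinian ℘-function `℘_{i j i₃ … iₙ} = ∂_{i₃}⋯∂_{iₙ} ℘_{ij}`. -/
noncomputable def wpN {g : ℕ} (σ : (Fin g → ℂ) → ℂ) (i j : Fin g) (rest : List (Fin g)) :
    (Fin g → ℂ) → ℂ :=
  pdList rest (wp2 σ i j)

/-- The diagonal value `(Δ_{i₁}⋯Δ_{iₙ} σ(u)σ(v))|_{v=u}
    = Σ_{S⊆{1,…,n}} (−1)^{|S|}·((∏_{k∈S}∂_{i_k})σ)(u)·((∏_{k∉S}∂_{i_k})σ)(u)`. -/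
noncomputable def hirotaDiag {g : ℕ} (σ : (Fin g → ℂ) → ℂ) (l : List (Fin g))
    (u : Fin g → ℂ) : ℂ :=
  ∑ S : Finset (Fin l.length),
    (-1 : ℂ) ^ S.card
      * pdList (((List.finRange l.length).filter (fun k => decide (k ∈ S))).map l.get) σ u
      * pdList (((List.finRange l.length).filter (fun k => decide (k ∉ S))).map l.get) σ u

/-- The n-index Q-function (n even): `Q_{i₁…iₙ}(u) = −(1/(2σ(u)²))·(Δ_{i₁}⋯Δ_{iₙ}σ(u)σ(v))|_{v=u}`. -/
noncomputable def Qfun {g : ℕ} (σ : (Fin g → ℂ) → ℂ) (l : List (Fin g))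
    (u : Fin g → ℂ) : ℂ :=
  -(1 / (2 * (σ u) ^ 2)) * hirotaDiag σ l u


/-!
The Hirota form `D(f, h) = (Δ_{i₁}⋯Δ_{iₙ} f(u)h(v))|_{v=u}` commutes with translations and is
gauge invariant: if `∂_i E = a_i E` for every `i`, then `D(E f, E h) = E² D(f, h)`, since in
`Δ_i (E(u) E(v) F)` the derivatives of the two factors `E` cancel. Quasi-periodicity says
`σ(· + ℓ) = E σ` for such an `E`, hence `D(σ, σ)(u + ℓ) = E(u)² D(σ, σ)(u)`, and `E(u)²` cancels
against `σ(u + ℓ)² = E(u)² σ(u)²` in `Q`.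
-/

open Finset

variable {g : ℕ}

theorem analyticOnNhd_pd {f : (Fin g → ℂ) → ℂ} (hf : AnalyticOnNhd ℂ f Set.univ) (i : Fin g) :
    AnalyticOnNhd ℂ (pd i f) Set.univ :=
  (ContinuousLinearMap.apply ℂ ℂ (Pi.single i 1 : Fin g → ℂ)).comp_analyticOnNhd hf.fderiv

theorem pdList_cons (i : Fin g) (m : List (Fin g)) (f : (Fin g → ℂ) → ℂ) :
    pdList (i :: m) f = pd i (pdList m f) := rfl

theorem pdList_append_singleton (m : List (Fin g)) (j : Fin g) (f : (Fin g → ℂ) → ℂ) :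
    pdList (m ++ [j]) f = pdList m (pd j f) := by
  simp [pdList, List.foldr_append]

theorem analyticOnNhd_pdList {f : (Fin g → ℂ) → ℂ} (hf : AnalyticOnNhd ℂ f Set.univ)
    (m : List (Fin g)) : AnalyticOnNhd ℂ (pdList m f) Set.univ := by
  induction m with
  | nil => exact hf
  | cons i m ih => exact analyticOnNhd_pd ih i

theorem pd_mul {f h : (Fin g → ℂ) → ℂ} {u : Fin g → ℂ} (hf : DifferentiableAt ℂ f u)
    (hh : DifferentiableAt ℂ h u) (i : Fin g) :
    pd i (fun x => f x * h x) u = pd i f u * h u + f u * pd i h u := by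
  simp only [pd, fderiv_fun_mul hf hh, add_apply, smul_apply, smul_eq_mul]
  ring

theorem pd_const_mul_add {f h : (Fin g → ℂ) → ℂ} {u : Fin g → ℂ} (hf : DifferentiableAt ℂ f u)
    (hh : DifferentiableAt ℂ h u) (c : ℂ) (i : Fin g) :
    pd i (fun x => c * f x + h x) u = c * pd i f u + pd i h u := by
  simp [pd, fderiv_fun_add (hf.const_mul c) hh, fderiv_const_mul hf]

theorem pdList_const_mul_add {f h : (Fin g → ℂ) → ℂ} (hf : AnalyticOnNhd ℂ f Set.univ)
    (hh : AnalyticOnNhd ℂ h Set.univ) (c : ℂ) (m : List (Fin g)) :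
    pdList m (fun x => c * f x + h x) = fun u => c * pdList m f u + pdList m h u := by
  induction m with
  | nil => rfl
  | cons i m ih =>
    funext u
    rw [pdList_cons, ih]
    exact pd_const_mul_add ((analyticOnNhd_pdList hf m u trivial).differentiableAt)
      ((analyticOnNhd_pdList hh m u trivial).differentiableAt) c i

theorem pdList_comp_add_const (f : (Fin g → ℂ) → ℂ) (ℓ : Fin g → ℂ) (m : List (Fin g)) :
    pdList m (fun x => f (x + ℓ)) = fun u => pdList m f (u + ℓ) := by
  induction m with
  | nil => rfl
  | cons i m ih =>
    funext u
    rw [pdList_cons, ih]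
    exact congrFun (congrArg DFunLike.coe (fderiv_comp_add_right ℓ)) (Pi.single i 1)

theorem pd_const_mul_cexp_affine (c : ℂ) (a : Fin g → ℂ) (b : ℂ) (i : Fin g) (u : Fin g → ℂ) :
    pd i (fun x => c * Complex.exp (∑ k, a k * x k + b)) u
      = a i * (c * Complex.exp (∑ k, a k * u k + b)) := by
  have hlin : HasFDerivAt (fun x : Fin g → ℂ => ∑ k, a k * x k + b)
      (∑ k, a k • ContinuousLinearMap.proj (R := ℂ) (φ := fun _ : Fin g => ℂ) k) u :=
    (HasFDerivAt.fun_sum fun k _ => (hasFDerivAt_apply k u).const_mul (a k)).add_const b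
  rw [pd, (hlin.cexp.const_mul c).fderiv]
  simp [Pi.single_apply]
  ring

theorem sum_finset_fin_succ {M : Type*} [AddCommMonoid M] {n : ℕ} (F : Finset (Fin (n + 1)) → M) :
    ∑ S, F S = ∑ T : Finset (Fin n),
      (F (T.map Fin.castSuccEmb) + F (insert (Fin.last n) (T.map Fin.castSuccEmb))) := by
  have hmap : ((univ : Finset (Fin n)).map Fin.castSuccEmb).powerset
      = (univ : Finset (Finset (Fin n))).map ⟨map Fin.castSuccEmb, map_injective _⟩ := by
    ext t
    simp [subset_map_iff, eq_comm]
  rw [← powerset_univ, Fin.univ_castSuccEmb, cons_eq_insert, sum_powerset_insert (by simp),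
    hmap, sum_map, sum_map, ← sum_add_distrib]
  rfl

/-- `(Δ_{v 0}⋯Δ_{v (n-1)} f(u)h(w))|_{w=u}`, so that `hirotaDiag σ l = hirota l.get σ σ`. -/
noncomputable def hirota {n : ℕ} (v : Fin n → Fin g) (f h : (Fin g → ℂ) → ℂ)
    (u : Fin g → ℂ) : ℂ :=
  ∑ S : Finset (Fin n),
    (-1 : ℂ) ^ S.card
      * pdList (((List.finRange n).filter (fun k => decide (k ∈ S))).map v) f u
      * pdList (((List.finRange n).filter (fun k => decide (k ∉ S))).map v) h u

theorem hirota_zero (v : Fin 0 → Fin g) (f h : (Fin g → ℂ) → ℂ) (u : Fin g → ℂ) :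
    hirota v f h u = f u * h u := by
  simp [hirota, pdList, Subsingleton.elim (default : Finset (Fin 0)) ∅]

theorem filter_finRange_succ_map {α : Type*} {n : ℕ} (p : Fin (n + 1) → Bool)
    (v : Fin (n + 1) → α) :
    ((List.finRange (n + 1)).filter p).map v
      = ((List.finRange n).filter (fun k => p k.castSucc)).map (Fin.init v)
        ++ if p (Fin.last n) then [v (Fin.last n)] else [] := by
  rw [List.finRange_succ_last, List.filter_append, List.map_append, List.filter_map,
    List.map_map, List.filter_singleton]
  cases p (Fin.last n) <;> rfl

theorem hirota_succ {n : ℕ} (v : Fin (n + 1) → Fin g) (f h : (Fin g → ℂ) → ℂ)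
    (u : Fin g → ℂ) :
    hirota v f h u
      = hirota (Fin.init v) f (pd (v (Fin.last n)) h) u
        - hirota (Fin.init v) (pd (v (Fin.last n)) f) h u := by
  rw [hirota, sum_finset_fin_succ, hirota, hirota, ← sum_sub_distrib]
  refine sum_congr rfl fun T _ => ?_
  have hlast : Fin.last n ∉ T.map Fin.castSuccEmb := by simp [Fin.castSucc_ne_last]
  simp only [card_map, mem_map, Fin.coe_castSuccEmb, filter_finRange_succ_map, Fin.castSucc_inj,
    exists_eq_right, Fin.castSucc_ne_last, and_false, exists_false, decide_false,
    Bool.false_eq_true, ↓reduceIte, List.append_nil, not_exists, not_and, forall_mem_not_eq',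
    decide_not, not_false_eq_true, implies_true, decide_true, card_insert_of_notMem hlast,
    mem_insert, Bool.decide_or, Bool.false_or, Bool.or_false, not_or, Bool.decide_and,
    Bool.not_false, Bool.true_and, Bool.not_true, Bool.and_true]
  rw [pdList_append_singleton, pdList_append_singleton, pow_succ]
  ring

section Bilinear

variable {n : ℕ} (v : Fin n → Fin g)

theorem hirota_const_mul_add_left {f₁ f₂ : (Fin g → ℂ) → ℂ} (hf₁ : AnalyticOnNhd ℂ f₁ Set.univ)
    (hf₂ : AnalyticOnNhd ℂ f₂ Set.univ) (c : ℂ) (h : (Fin g → ℂ) → ℂ) (u : Fin g → ℂ) :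
    hirota v (fun x => c * f₁ x + f₂ x) h u = c * hirota v f₁ h u + hirota v f₂ h u := by
  simp only [hirota, pdList_const_mul_add hf₁ hf₂, mul_sum, ← sum_add_distrib]
  exact sum_congr rfl fun _ _ => by ring

theorem hirota_const_mul_add_right (f : (Fin g → ℂ) → ℂ) {h₁ h₂ : (Fin g → ℂ) → ℂ}
    (hh₁ : AnalyticOnNhd ℂ h₁ Set.univ) (hh₂ : AnalyticOnNhd ℂ h₂ Set.univ) (c : ℂ)
    (u : Fin g → ℂ) :
    hirota v f (fun x => c * h₁ x + h₂ x) u = c * hirota v f h₁ u + hirota v f h₂ u := by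
  simp only [hirota, pdList_const_mul_add hh₁ hh₂, mul_sum, ← sum_add_distrib]
  exact sum_congr rfl fun _ _ => by ring

end Bilinear

theorem hirota_comp_add_const {n : ℕ} (v : Fin n → Fin g) (f h : (Fin g → ℂ) → ℂ)
    (ℓ u : Fin g → ℂ) :
    hirota v (fun x => f (x + ℓ)) (fun x => h (x + ℓ)) u = hirota v f h (u + ℓ) := by
  simp only [hirota, pdList_comp_add_const]

theorem hirota_mul_of_pd_eq {E : (Fin g → ℂ) → ℂ} (hE : Differentiable ℂ E) (a : Fin g → ℂ)
    (hEa : ∀ i x, pd i E x = a i * E x) {n : ℕ} (v : Fin n → Fin g) {f h : (Fin g → ℂ) → ℂ}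
    (hf : AnalyticOnNhd ℂ f Set.univ) (hh : AnalyticOnNhd ℂ h Set.univ) (u : Fin g → ℂ) :
    hirota v (fun x => E x * f x) (fun x => E x * h x) u = E u ^ 2 * hirota v f h u := by
  induction n generalizing f h with
  | zero => rw [hirota_zero, hirota_zero]; ring
  | succ n ih =>
    set j := v (Fin.last n)
    have hpd : ∀ {F : (Fin g → ℂ) → ℂ}, AnalyticOnNhd ℂ F Set.univ →
        pd j (fun x => E x * F x) = fun x => E x * (a j * F x + pd j F x) := fun hF =>
      funext fun x => by
        rw [pd_mul (hE x) (hF x trivial).differentiableAt, hEa]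
        ring
    have hanalytic : ∀ {F : (Fin g → ℂ) → ℂ}, AnalyticOnNhd ℂ F Set.univ →
        AnalyticOnNhd ℂ (fun x => a j * F x + pd j F x) Set.univ := fun hF =>
      (analyticOnNhd_const.mul hF).add (analyticOnNhd_pd hF j)
    rw [hirota_succ, hirota_succ, hpd hf, hpd hh, ih _ hf (hanalytic hh), ih _ (hanalytic hf) hh,
      hirota_const_mul_add_right _ _ hh (analyticOnNhd_pd hh j),
      hirota_const_mul_add_left _ hf (analyticOnNhd_pd hf j)]
    ring

theorem Q_periodic_of_quasi_periodic_general {g : ℕ} (σ : (Fin g → ℂ) → ℂ)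
    (hσ : AnalyticOnNhd ℂ σ Set.univ) (ℓ : Fin g → ℂ)
    (c : ℂ) (hc : c ≠ 0) (a : Fin g → ℂ) (b : ℂ)
    (hqp : ∀ u : Fin g → ℂ, σ (u + ℓ) = c * Complex.exp ((∑ k, a k * u k) + b) * σ u) :
    ∀ (l : List (Fin g)), Even l.length →
      ∀ u : Fin g → ℂ, σ u ≠ 0 →
        σ (u + ℓ) ≠ 0 ∧ Qfun σ l (u + ℓ) = Qfun σ l u := by
  intro l _ u hσu
  set E : (Fin g → ℂ) → ℂ := fun x => c * Complex.exp (∑ k, a k * x k + b)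
  have hEu : E u ≠ 0 := mul_ne_zero hc (Complex.exp_ne_zero _)
  have hqpE : ∀ x, σ (x + ℓ) = E x * σ x := hqp
  have hdiag : hirotaDiag σ l (u + ℓ) = E u ^ 2 * hirotaDiag σ l u :=
    calc hirota l.get σ σ (u + ℓ)
        = hirota l.get (fun x => σ (x + ℓ)) (fun x => σ (x + ℓ)) u :=
          (hirota_comp_add_const _ _ _ _ _).symm
      _ = hirota l.get (fun x => E x * σ x) (fun x => E x * σ x) u := by simp only [hqpE]
      _ = E u ^ 2 * hirota l.get σ σ u :=
          hirota_mul_of_pd_eq (by fun_prop) a (pd_const_mul_cexp_affine c a b) l.get hσ hσ u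
  refine ⟨by rw [hqpE]; exact mul_ne_zero hEu hσu, ?_⟩
  rw [Qfun, Qfun, hdiag, hqpE]
  field_simp

/-- quasi-periodicity of `σ` (with affine exponent) implies that every
n-index Q-function of `σ` (`n` even) is periodic with period `ℓ`. -/
theorem Q_periodic_of_quasi_periodic {g : ℕ} (hg : 1 ≤ g) (σ : (Fin g → ℂ) → ℂ)
    (hσ : AnalyticOnNhd ℂ σ Set.univ) (ℓ : Fin g → ℂ)
    (c : ℂ) (hc : c ≠ 0) (a : Fin g → ℂ) (b : ℂ)
    (hqp : ∀ u : Fin g → ℂ, σ (u + ℓ) = c * Complex.exp ((∑ k, a k * u k) + b) * σ u) :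
    ∀ (l : List (Fin g)), Even l.length →
      ∀ u : Fin g → ℂ, σ u ≠ 0 →
        σ (u + ℓ) ≠ 0 ∧ Qfun σ l (u + ℓ) = Qfun σ l u :=
  Q_periodic_of_quasi_periodic_general σ hσ ℓ c hc a b hqp
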